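/- If a differentiable function E : [0,T] → (0,∞) satisfies E'(t) ≤ C (1 + E(t)^{s/2}) E(t) for all t ∈ [0,T], then d/dt [ ln( E(t) / (1 + E(t)^{s/2})^{2/s} ) ] ≤ C for all t ∈ [0,T], and consequently E(t)/(1+E(t)^{s/2})^{2/s} ≤ E(0)/(1+E(0)^{s/2})^{2/s} · e^{Ct}. -/

import Mathlib

/-!
Write `p = s/2`. For `y > 0` one has `log (y / (1 + y^p)^(1/p)) = log y - (1/p) log (1 + y^p)`,
whose derivative is `1/y - y^(p-1)/(1 + y^p) = 1 / (y (1 + y^p))`. By the chain rule the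
derivative along `E` is `E' / (E (1 + E^p))`, which the differential inequality bounds by `C`;
integrating this bound and exponentiating gives the growth estimate.
-/

open Set Real

theorem hasDerivAt_log_div_one_add_rpow_rpow_inv {p x : ℝ} (hp : p ≠ 0) (hx : 0 < x) :
    HasDerivAt (fun y => log (y / (1 + y ^ p) ^ p⁻¹)) (1 / (x * (1 + x ^ p))) x := by
  have hxp : 0 < 1 + x ^ p := by positivity
  have hsplit : (fun y => log y - p⁻¹ * log (1 + y ^ p)) =ᶠ[nhds x]
      fun y => log (y / (1 + y ^ p) ^ p⁻¹) := by
    filter_upwards [lt_mem_nhds hx] with y hy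
    have hyp : 0 < 1 + y ^ p := by positivity
    rw [log_div hy.ne' (rpow_pos_of_pos hyp _).ne', log_rpow hyp]
  have hderiv : HasDerivAt (fun y => log y - p⁻¹ * log (1 + y ^ p))
      (x⁻¹ - p⁻¹ * ((1 * p * x ^ (p - 1)) / (1 + x ^ p))) x :=
    (hasDerivAt_log hx.ne').sub <| HasDerivAt.const_mul p⁻¹ <|
      (((hasDerivAt_id' x).rpow_const (Or.inl hx.ne')).const_add 1).log hxp.ne'
  refine (hderiv.congr_of_eventuallyEq hsplit.symm).congr_deriv ?_
  rw [rpow_sub hx, rpow_one]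
  field_simp
  ring

theorem Convex.image_sub_le_mul_sub_of_hasDerivAt_le {D : Set ℝ} (hD : Convex ℝ D)
    {f f' : ℝ → ℝ} (hf : ∀ x ∈ D, HasDerivAt f (f' x) x) {C : ℝ} (hle : ∀ x ∈ D, f' x ≤ C)
    {x y : ℝ} (hx : x ∈ D) (hy : y ∈ D) (hxy : x ≤ y) : f y - f x ≤ C * (y - x) :=
  hD.image_sub_le_mul_sub_of_deriv_le
    (fun z hz => (hf z hz).continuousAt.continuousWithinAt)
    (fun z hz => (hf z (interior_subset hz)).differentiableAt.differentiableWithinAt)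
    (fun z hz => (hf z (interior_subset hz)).deriv ▸ hle z (interior_subset hz)) x hx y hy hxy

theorem le_mul_exp_of_hasDerivAt_log_le {Q d : ℝ → ℝ} {a b C : ℝ}
    (hQ : ∀ x ∈ Icc a b, 0 < Q x) (hd : ∀ x ∈ Icc a b, HasDerivAt (fun τ => log (Q τ)) (d x) x)
    (hle : ∀ x ∈ Icc a b, d x ≤ C) {x : ℝ} (hx : x ∈ Icc a b) :
    Q x ≤ Q a * exp (C * (x - a)) := by
  have ha : a ∈ Icc a b := left_mem_Icc.2 (hx.1.trans hx.2)
  have hlog := (convex_Icc a b).image_sub_le_mul_sub_of_hasDerivAt_le hd hle ha hx hx.1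
  calc Q x = exp (log (Q x)) := (exp_log (hQ x hx)).symm
    _ ≤ exp (log (Q a) + C * (x - a)) := exp_le_exp.2 (by linarith)
    _ = Q a * exp (C * (x - a)) := by rw [exp_add, exp_log (hQ a ha)]

theorem stmt3_general (s C T : ℝ) (hs : 1 ≤ s)
    (E E' : ℝ → ℝ)
    (hEpos : ∀ t ∈ Set.Icc (0 : ℝ) T, 0 < E t)
    (hE : ∀ t ∈ Set.Icc (0 : ℝ) T, HasDerivAt E (E' t) t)
    (hineq : ∀ t ∈ Set.Icc (0 : ℝ) T, E' t ≤ C * (1 + E t ^ (s / 2)) * E t) :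
    (∀ t ∈ Set.Icc (0 : ℝ) T, ∃ d : ℝ,
      HasDerivAt (fun τ : ℝ => Real.log (E τ / (1 + E τ ^ (s / 2)) ^ (2 / s))) d t ∧
      d ≤ C) ∧
    (∀ t ∈ Set.Icc (0 : ℝ) T,
      E t / (1 + E t ^ (s / 2)) ^ (2 / s) ≤
        E 0 / (1 + E 0 ^ (s / 2)) ^ (2 / s) * Real.exp (C * t)) := by
  rw [← inv_div s 2]
  have hp : s / 2 ≠ 0 := by positivity
  have hderiv : ∀ t ∈ Icc (0 : ℝ) T, HasDerivAt
      (fun τ => log (E τ / (1 + E τ ^ (s / 2)) ^ (s / 2)⁻¹))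
      (1 / (E t * (1 + E t ^ (s / 2))) * E' t) t := fun t ht =>
    (hasDerivAt_log_div_one_add_rpow_rpow_inv hp (hEpos t ht)).comp t (hE t ht)
  have hbound : ∀ t ∈ Icc (0 : ℝ) T, 1 / (E t * (1 + E t ^ (s / 2))) * E' t ≤ C := by
    intro t ht
    have := hEpos t ht
    rw [one_div_mul_eq_div, div_le_iff₀ (by positivity)]
    linarith [hineq t ht]
  refine ⟨fun t ht => ⟨_, hderiv t ht, hbound t ht⟩, fun t ht => ?_⟩
  have hQ : ∀ t ∈ Icc (0 : ℝ) T, 0 < E t / (1 + E t ^ (s / 2)) ^ (s / 2)⁻¹ := fun t ht => by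
    have := hEpos t ht
    positivity
  simpa using le_mul_exp_of_hasDerivAt_log_le hQ hderiv hbound ht

theorem stmt3 (s C T : ℝ) (hs : 1 ≤ s) (hC : 0 < C) (hT : 0 < T)
    (E E' : ℝ → ℝ)
    (hEpos : ∀ t ∈ Set.Icc (0 : ℝ) T, 0 < E t)
    (hE : ∀ t ∈ Set.Icc (0 : ℝ) T, HasDerivAt E (E' t) t)
    (hineq : ∀ t ∈ Set.Icc (0 : ℝ) T, E' t ≤ C * (1 + E t ^ (s / 2)) * E t) :
    (∀ t ∈ Set.Icc (0 : ℝ) T, ∃ d : ℝ,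
      HasDerivAt (fun τ : ℝ => Real.log (E τ / (1 + E τ ^ (s / 2)) ^ (2 / s))) d t ∧
      d ≤ C) ∧
    (∀ t ∈ Set.Icc (0 : ℝ) T,
      E t / (1 + E t ^ (s / 2)) ^ (2 / s) ≤
        E 0 / (1 + E 0 ^ (s / 2)) ^ (2 / s) * Real.exp (C * t)) :=
  stmt3_general s C T hs E E' hEpos hE hineq
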